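/- arXiv:1107.0348 — 2 statements merged into one kernel-verified Lean document; each statement's English description precedes it below -/
import Mathlib

section
/- Let f, g : [0,1) → ℝ be bounded non-increasing functions with ‖g‖_∞ ≤ π, and suppose that for every arc I of the unit circle S¹ the Lebesgue measures of the sets {t ∈ [0,1) : e^{i f(t)} ∈ I} and {t ∈ [0,1) : e^{i g(t)} ∈ I} are equal. Then there exists a measurable function ḡ : [0,1) → ℝ such that e^{i f(t)} = e^{i ḡ(t)} for every t ∈ [0,1) and the decreasing rearrangement ḡ* of ḡ equals g almost everywhere on [0,1). -/
/-!
Let `φ(t) ∈ (-π, π]` be the principal argument of `e^{i f(t)}`. Applied to arcs inside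
`(-π, π]`, the arc hypothesis says that `φ` and the principal argument of `e^{i g}` have the same
distribution on `[0,1)`. Since `|g| ≤ π`, the principal argument of `e^{i g}` is `g` with the
value `-π` replaced by `π`. Moving a subset of `{φ = π}` of measure `|{g = -π}|` down to `-π`
therefore gives a lift `ḡ` of `e^{i f}` with the same distribution function as `g`, hence with
the same decreasing rearrangement. Finally, an antitone `g` agrees with its rearrangement at
every interior point of continuity, so almost everywhere.
-/

open MeasureTheory

/-- The decreasing rearrangement of a function `h : [0,1) → ℝ` (with respect to
Lebesgue measure on `[0,1)`): `h*(t) = inf {s : |{x ∈ [0,1) : h(x) > s}| ≤ t}`. -/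
noncomputable def decreasingRearrangement (h : ℝ → ℝ) (t : ℝ) : ℝ :=
  sInf {s : ℝ | volume {x ∈ Set.Ico (0:ℝ) 1 | s < h x} ≤ ENNReal.ofReal t}

open Set Real Complex
open scoped ENNReal

theorem exp_I_mul_eq_exp_I_mul_iff (a b : ℝ) :
    exp (I * a) = exp (I * b) ↔ (a : Angle) = b := by
  rw [Complex.exp_eq_exp_iff_exists_int, Angle.angle_eq_iff_two_pi_dvd_sub]
  refine exists_congr fun n => ⟨fun h => ?_, fun h => Complex.ext ?_ ?_⟩
  · simpa [sub_eq_iff_eq_add', mul_comm] using congrArg Complex.im h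
  · simp
  · simpa using show a = b + n * (2 * π) by linarith

theorem exists_mem_exp_I_mul_eq_iff {J : Set ℝ} (hJ : J ⊆ Ioc (-π) π) (x : ℝ) :
    (∃ θ ∈ J, exp (I * x) = exp (I * θ)) ↔ (x : Angle).toReal ∈ J := by
  simp_rw [exp_I_mul_eq_exp_I_mul_iff]
  constructor
  · rintro ⟨θ, hθ, hxθ⟩
    rwa [hxθ, Angle.toReal_coe_eq_self_iff_mem_Ioc.2 (hJ hθ)]
  · exact fun hx => ⟨_, hx, (Angle.coe_toReal _).symm⟩

theorem measurable_angle_toReal_coe : Measurable fun x : ℝ => (x : Angle).toReal := by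
  simp_rw [Angle.toReal_coe, toIocMod_eq_sub_fract_mul]
  fun_prop

theorem AntitoneOn.ordConnected_sep_eq {α β : Type*} [Preorder α] [PartialOrder β]
    {s : Set α} {g : α → β} (hs : s.OrdConnected) (hg : AntitoneOn g s) (c : β) :
    {x ∈ s | g x = c}.OrdConnected := by
  refine ⟨fun x hx y hy z hz => ?_⟩
  have hzs := hs.out hx.1 hy.1 hz
  exact ⟨hzs, le_antisymm (hx.2 ▸ hg hx.1 hzs hz.1) (hy.2 ▸ hg hzs hy.1 hz.2)⟩

theorem AntitoneOn.exists_measurable_eqOn {s : Set ℝ} {f : ℝ → ℝ} (hs : MeasurableSet s)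
    (hf : AntitoneOn f s) : ∃ f' : ℝ → ℝ, Measurable f' ∧ EqOn f f' s := by
  classical
  refine ⟨s.piecewise f 0, measurable_of_restrict_of_restrict_compl hs ?_ ?_,
    fun x hx => (piecewise_eq_of_mem _ _ _ hx).symm⟩
  · rw [domRestrict_piecewise]
    exact Antitone.measurable fun x y hxy => hf x.2 y.2 hxy
  · rw [domRestrict_piecewise_compl]
    exact measurable_const

theorem exists_subset_volume_eq {A : Set ℝ} {a b : ℝ} (hA : MeasurableSet A)
    (hAab : A ⊆ Ico a b) {m : ℝ≥0∞} (hm : m ≤ volume A) :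
    ∃ B ⊆ A, MeasurableSet B ∧ volume B = m := by
  have hfin : ∀ c, volume (A ∩ Iio c) ≠ ∞ := fun c =>
    ((measure_mono (inter_subset_left.trans hAab)).trans_lt (by simp)).ne
  set φ : ℝ → ℝ := fun c => (volume (A ∩ Iio c)).toReal
  -- `A ∩ Iio x` exceeds `A ∩ Iio y` at most by `Ico y x`, so `φ` is `1`-Lipschitz.
  have hφ : LipschitzWith 1 φ := LipschitzWith.of_le_add fun x y => by
    have hsub : A ∩ Iio x ⊆ (A ∩ Iio y) ∪ Ico y x := fun z hz =>
      (lt_or_ge z y).imp (fun hzy => ⟨hz.1, hzy⟩) fun hyz => ⟨hyz, hz.2⟩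
    have : volume (A ∩ Iio x) ≤ volume (A ∩ Iio y) + ENNReal.ofReal (dist x y) :=
      calc volume (A ∩ Iio x) ≤ volume (A ∩ Iio y) + volume (Ico y x) :=
            (measure_mono hsub).trans (measure_union_le _ _)
        _ ≤ _ := by
          rw [Real.volume_Ico]
          gcongr
          exact (le_abs_self _).trans_eq (Real.dist_eq x y).symm
    simpa [φ, ENNReal.toReal_add (hfin y) ENNReal.ofReal_ne_top, dist_nonneg] using
      ENNReal.toReal_mono (ENNReal.add_ne_top.2 ⟨hfin y, ENNReal.ofReal_ne_top⟩) this
  have hAa : A ∩ Iio a = ∅ := (disjoint_left.2 fun z hz hza => (not_lt.2 (hAab hz).1) hza).inter_eq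
  have hAb : A ∩ Iio b = A := inter_eq_left.2 fun z hz => (hAab hz).2
  have hAfin : volume A ≠ ∞ := hAb ▸ hfin b
  obtain ⟨c, -, hc⟩ := intermediate_value_uIcc hφ.continuous.continuousOn
    (Icc_subset_uIcc (show m.toReal ∈ Icc (φ a) (φ b) by
      simpa [φ, hAa, hAb] using ENNReal.toReal_mono hAfin hm))
  exact ⟨A ∩ Iio c, inter_subset_left, hA.inter measurableSet_Iio,
    (ENNReal.toReal_eq_toReal_iff' (hfin c) (ne_top_of_le_ne_top hAfin hm)).1 hc⟩

section LevelSets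

variable {α : Type*} {S : Set α} {s : ℝ}

theorem sep_lt_eq_of_notMem_Ico {h : α → ℝ} {a b : ℝ} (hh : ∀ t ∈ S, h t ∈ Icc a b)
    (hs : s ∉ Ico a b) : {t ∈ S | s < h t} = {t ∈ S | s < a} := by
  refine sep_ext_iff.2 fun t ht => ?_
  have := hh t ht
  rw [mem_Ico, not_and_or, not_le, not_lt] at hs
  constructor <;> intro <;> rcases hs with hs | hs <;> linarith [this.1, this.2]

theorem sep_lt_piecewise_eq_sdiff {B : Set α} [DecidablePred (· ∈ B)] {φ : α → ℝ} {a b : ℝ}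
    (hφ : ∀ t ∈ S, φ t ∈ Ioc a b) (hs : a ≤ s) :
    {t ∈ S | s < B.piecewise (fun _ => a) φ t} = {t ∈ S | φ t ∈ Ioc s b} \ B := by
  ext t
  by_cases ht : t ∈ B
  · simp [ht, hs]
  · simp only [mem_sep_iff, mem_sdiff, piecewise_eq_of_notMem _ _ _ ht, mem_Ioc, ht,
      not_false_eq_true, and_true]
    exact and_congr_right fun ht => (and_iff_left (hφ t ht).2).symm

theorem sep_lt_eq_sep_toReal_coe_mem_sdiff {g : α → ℝ} (hg : ∀ t ∈ S, g t ∈ Icc (-π) π)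
    (hs : -π ≤ s) :
    {t ∈ S | s < g t} = {t ∈ S | (g t : Angle).toReal ∈ Ioc s π} \ {t ∈ S | g t = -π} := by
  ext t
  by_cases ht : t ∈ S
  · by_cases hgt : g t = -π
    · simp only [mem_sep_iff, mem_sdiff, ht, hgt, true_and, not_true_eq_false, and_false,
        iff_false, not_lt]
      exact hs
    · have hmem : g t ∈ Ioc (-π) π := ⟨(hg t ht).1.lt_of_ne' hgt, (hg t ht).2⟩
      simp [ht, hgt, Angle.toReal_coe_eq_self_iff_mem_Ioc.2 hmem, hmem.2]
  · simp only [mem_sep_iff, mem_sdiff, ht, false_and]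

end LevelSets

theorem exists_measurable_lift_with_same_distribution {φ g : ℝ → ℝ} (hφ : Measurable φ)
    (hφ_mem : ∀ t ∈ Ico (0:ℝ) 1, φ t ∈ Ioc (-π) π)
    (hg_mem : ∀ t ∈ Ico (0:ℝ) 1, g t ∈ Icc (-π) π)
    (hN : MeasurableSet {t ∈ Ico (0:ℝ) 1 | g t = -π})
    (hdist : ∀ J ⊆ Ioc (-π) π, J.OrdConnected →
      volume {t ∈ Ico (0:ℝ) 1 | φ t ∈ J} = volume {t ∈ Ico (0:ℝ) 1 | (g t : Angle).toReal ∈ J}) :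
    ∃ gb : ℝ → ℝ, Measurable gb ∧ (∀ t, (gb t : Angle) = φ t) ∧
      ∀ s, volume {t ∈ Ico (0:ℝ) 1 | s < gb t} = volume {t ∈ Ico (0:ℝ) 1 | s < g t} := by
  classical
  set N := {t ∈ Ico (0:ℝ) 1 | g t = -π}
  have hNA : volume N ≤ volume {t ∈ Ico (0:ℝ) 1 | φ t = π} := by
    have h := hdist {π} (singleton_subset_iff.2 ⟨by linarith [pi_pos], le_rfl⟩)
      ordConnected_singleton
    simp only [mem_singleton_iff] at h
    exact h ▸ measure_mono fun t ht => ⟨ht.1, by simp [ht.2]⟩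
  have hNfin : volume N ≠ ∞ := ((measure_mono (sep_subset _ _)).trans_lt (by simp)).ne
  obtain ⟨B, hBA, hB, hBN⟩ := exists_subset_volume_eq (A := {t ∈ Ico (0:ℝ) 1 | φ t = π})
    (measurableSet_Ico.inter (hφ (measurableSet_singleton π))) (fun t ht => ht.1) hNA
  refine ⟨B.piecewise (fun _ => -π) φ, measurable_const.piecewise hB hφ, fun t => ?_, fun s => ?_⟩
  · by_cases ht : t ∈ B
    · simp [ht, (hBA ht).2]
    · simp [ht]
  by_cases hs : s ∈ Ico (-π) π
  · have hBsub : B ⊆ {t ∈ Ico (0:ℝ) 1 | φ t ∈ Ioc s π} := fun t ht =>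
      ⟨(hBA ht).1, by rw [(hBA ht).2]; exact ⟨hs.2, le_rfl⟩⟩
    have hNsub : N ⊆ {t ∈ Ico (0:ℝ) 1 | (g t : Angle).toReal ∈ Ioc s π} := fun t ht =>
      ⟨ht.1, by simp [ht.2, hs.2]⟩
    rw [sep_lt_piecewise_eq_sdiff hφ_mem hs.1, sep_lt_eq_sep_toReal_coe_mem_sdiff hg_mem hs.1,
      measure_sdiff hBsub hB.nullMeasurableSet (hBN ▸ hNfin),
      measure_sdiff hNsub hN.nullMeasurableSet hNfin, hBN,
      hdist _ (Ioc_subset_Ioc_left hs.1) ordConnected_Ioc]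
  · have hgb_mem : ∀ t ∈ Ico (0:ℝ) 1, B.piecewise (fun _ => -π) φ t ∈ Icc (-π) π := by
      intro t ht
      by_cases htB : t ∈ B
      · simp [htB, pi_pos.le]
      · simpa [htB] using Ioc_subset_Icc_self (hφ_mem t ht)
    rw [sep_lt_eq_of_notMem_Ico hgb_mem hs, sep_lt_eq_of_notMem_Ico hg_mem hs]

theorem decreasingRearrangement_congr {h₁ h₂ : ℝ → ℝ}
    (h : ∀ s, volume {x ∈ Ico (0:ℝ) 1 | s < h₁ x} = volume {x ∈ Ico (0:ℝ) 1 | s < h₂ x}) :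
    decreasingRearrangement h₁ = decreasingRearrangement h₂ := by
  funext t
  simp only [decreasingRearrangement, h]

theorem AntitoneOn.decreasingRearrangement_eq {g : ℝ → ℝ} (hg : AntitoneOn g (Ico 0 1))
    {t : ℝ} (ht : t ∈ Ioo 0 1) (hcont : ContinuousWithinAt g (Ico 0 1) t) :
    decreasingRearrangement g t = g t := by
  have ht' : t ∈ Ico (0:ℝ) 1 := Ioo_subset_Ico_self ht
  set S := {s : ℝ | volume {x ∈ Ico (0:ℝ) 1 | s < g x} ≤ ENNReal.ofReal t}
  have hmem : g t ∈ S := by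
    have hsub : {x ∈ Ico (0:ℝ) 1 | g t < g x} ⊆ Ico 0 t := fun x hx =>
      ⟨hx.1.1, lt_of_not_ge fun htx => hx.2.not_ge (hg ht' hx.1 htx)⟩
    simpa [S, Real.volume_Ico] using measure_mono (μ := volume) hsub
  have hlower : ∀ s ∈ S, g t ≤ s := by
    intro s hs
    by_contra! hlt
    have := left_nhdsWithin_Ioo_neBot ht.2
    have hsub : Ioo t 1 ⊆ Ico 0 1 := fun x hx => ⟨ht.1.le.trans hx.1.le, hx.2⟩
    obtain ⟨u, hsu, htu, hu1⟩ : ∃ u, s < g u ∧ t < u ∧ u < 1 :=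
      (((hcont.mono hsub).eventually (lt_mem_nhds hlt)).and self_mem_nhdsWithin).exists
    have hIco : Ico 0 u ⊆ {x ∈ Ico (0:ℝ) 1 | s < g x} := fun x hx =>
      ⟨⟨hx.1, hx.2.trans hu1⟩,
        hsu.trans_le (hg ⟨hx.1, hx.2.trans hu1⟩ ⟨by linarith [ht.1], hu1⟩ hx.2.le)⟩
    have : ENNReal.ofReal u ≤ ENNReal.ofReal t := by
      simpa [Real.volume_Ico] using (measure_mono hIco).trans hs
    exact htu.not_ge ((ENNReal.ofReal_le_ofReal_iff ht.1.le).1 this)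
  exact le_antisymm (csInf_le ⟨g t, hlower⟩ hmem) (le_csInf ⟨_, hmem⟩ hlower)

theorem AntitoneOn.ae_decreasingRearrangement_eq {g : ℝ → ℝ} (hg : AntitoneOn g (Ico 0 1)) :
    ∀ᵐ t ∂volume.restrict (Ico (0:ℝ) 1), decreasingRearrangement g t = g t := by
  rw [← Measure.restrict_congr_set Ioo_ae_eq_Ico, ae_restrict_iff' measurableSet_Ioo]
  filter_upwards [measure_eq_zero_iff_ae_notMem.1
    (hg.countable_not_continuousWithinAt.measure_zero volume)] with t hcont ht
  exact hg.decreasingRearrangement_eq ht (not_not.1 fun h => hcont ⟨Ioo_subset_Ico_self ht, h⟩)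

theorem exists_measurable_log_with_rearrangement_general
    (f g : ℝ → ℝ)
    (hf_anti : AntitoneOn f (Set.Ico (0:ℝ) 1))
    (hg_anti : AntitoneOn g (Set.Ico (0:ℝ) 1))
    (hg_bdd : ∀ t ∈ Set.Ico (0:ℝ) 1, |g t| ≤ Real.pi)
    (harc : ∀ J : Set ℝ, J.OrdConnected →
      volume {t ∈ Set.Ico (0:ℝ) 1 |
          ∃ θ ∈ J, Complex.exp (Complex.I * (f t : ℂ)) =
            Complex.exp (Complex.I * (θ : ℂ))} =
      volume {t ∈ Set.Ico (0:ℝ) 1 |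
          ∃ θ ∈ J, Complex.exp (Complex.I * (g t : ℂ)) =
            Complex.exp (Complex.I * (θ : ℂ))}) :
    ∃ gb : ℝ → ℝ, Measurable gb ∧
      (∀ t ∈ Set.Ico (0:ℝ) 1,
        Complex.exp (Complex.I * (f t : ℂ)) = Complex.exp (Complex.I * (gb t : ℂ))) ∧
      (∀ᵐ t ∂(volume.restrict (Set.Ico (0:ℝ) 1)),
        decreasingRearrangement gb t = g t) := by
  obtain ⟨f', hf'_meas, hff'⟩ := hf_anti.exists_measurable_eqOn measurableSet_Ico
  have hdist : ∀ J ⊆ Ioc (-π) π, J.OrdConnected →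
      volume {t ∈ Ico (0:ℝ) 1 | (f' t : Angle).toReal ∈ J} =
        volume {t ∈ Ico (0:ℝ) 1 | (g t : Angle).toReal ∈ J} := fun J hJ hJc => by
    have h := harc J hJc
    simp only [exists_mem_exp_I_mul_eq_iff hJ] at h
    rwa [sep_ext_iff.2 fun t ht => by rw [hff' ht]] at h
  obtain ⟨gb, hgb_meas, hgb_lift, hgb_dist⟩ := exists_measurable_lift_with_same_distribution
    (measurable_angle_toReal_coe.comp hf'_meas) (fun t _ => Angle.toReal_mem_Ioc _)
    (fun t ht => abs_le.1 (hg_bdd t ht))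
    (hg_anti.ordConnected_sep_eq ordConnected_Ico _).measurableSet hdist
  refine ⟨gb, hgb_meas, fun t ht => ?_, ?_⟩
  · rw [exp_I_mul_eq_exp_I_mul_iff, hgb_lift, Function.comp_apply, Angle.coe_toReal, hff' ht]
  · rw [decreasingRearrangement_congr hgb_dist]
    exact hg_anti.ae_decreasingRearrangement_eq

/-- Let `f, g : [0,1) → ℝ` be bounded non-increasing functions with `‖g‖_∞ ≤ π` such
that for every arc `I` of the unit circle the sets `{t : e^{i f(t)} ∈ I}` and
`{t : e^{i g(t)} ∈ I}` have the same Lebesgue measure (arcs being the images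
`{e^{iθ} : θ ∈ J}` of intervals `J ⊆ ℝ`). Then there is a measurable function
`ḡ : [0,1) → ℝ` with `e^{i f(t)} = e^{i ḡ(t)}` for every `t ∈ [0,1)` whose decreasing
rearrangement equals `g` almost everywhere on `[0,1)`. -/
theorem exists_measurable_log_with_rearrangement
    (f g : ℝ → ℝ)
    (hf_anti : AntitoneOn f (Set.Ico (0:ℝ) 1))
    (hg_anti : AntitoneOn g (Set.Ico (0:ℝ) 1))
    (hf_bdd : ∃ C : ℝ, ∀ t ∈ Set.Ico (0:ℝ) 1, |f t| ≤ C)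
    (hg_bdd : ∀ t ∈ Set.Ico (0:ℝ) 1, |g t| ≤ Real.pi)
    (harc : ∀ J : Set ℝ, J.OrdConnected →
      volume {t ∈ Set.Ico (0:ℝ) 1 |
          ∃ θ ∈ J, Complex.exp (Complex.I * (f t : ℂ)) =
            Complex.exp (Complex.I * (θ : ℂ))} =
      volume {t ∈ Set.Ico (0:ℝ) 1 |
          ∃ θ ∈ J, Complex.exp (Complex.I * (g t : ℂ)) =
            Complex.exp (Complex.I * (θ : ℂ))}) :
    ∃ gb : ℝ → ℝ, Measurable gb ∧
      (∀ t ∈ Set.Ico (0:ℝ) 1,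
        Complex.exp (Complex.I * (f t : ℂ)) = Complex.exp (Complex.I * (gb t : ℂ))) ∧
      (∀ᵐ t ∂(volume.restrict (Set.Ico (0:ℝ) 1)),
        decreasingRearrangement gb t = g t) :=
  exists_measurable_log_with_rearrangement_general f g hf_anti hg_anti hg_bdd harc
end

section
/- Let H be a complex separable Hilbert space and let z be a bounded self-adjoint operator on H with ‖z‖ ≤ π. If the operator e^{iz} − 1 is compact, then z is compact. -/
/-!
`K = e^{iz} - 1` is compact, hence so is `K⋆K = 2 - 2 cos z`. Operators `T` with `T` and `T⋆`
compact form a norm-closed star subalgebra, so the continuous functional calculus of a compact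
self-adjoint operator with a function vanishing at `0` is again compact. Since
`arccos (cos t) = |t|` for `|t| ≤ π`, applying `s ↦ √(arccos (1 - s / 2))` to `K⋆K` gives `√|z|`,
and `z = (√z₊ - √z₋) √|z|` is compact.
-/

open Complex

namespace ContinuousLinearMap

section CompactStarSubalgebra

variable {𝕜 H : Type*} [RCLike 𝕜] [NormedAddCommGroup H] [InnerProductSpace 𝕜 H] [CompleteSpace H]

/-- By Schauder's theorem the second condition is redundant; imposing it makes closure under
`star` immediate. -/
def compactStarSubalgebra : NonUnitalStarSubalgebra 𝕜 (H →L[𝕜] H) where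
  carrier := {T | IsCompactOperator T ∧ IsCompactOperator ⇑(star T)}
  zero_mem' := ⟨isCompactOperator_zero, by simpa using isCompactOperator_zero⟩
  add_mem' hS hT := ⟨hS.1.add hT.1, by simpa using hS.2.add hT.2⟩
  mul_mem' {S T} hS hT := ⟨hS.1.comp_clm T, by simpa [star_mul] using hT.2.comp_clm (star S)⟩
  smul_mem' c T hT := ⟨hT.1.smul c, by simpa [star_smul] using hT.2.smul (star c)⟩
  star_mem' hT := by simpa [and_comm] using hT

lemma isClosed_compactStarSubalgebra :
    IsClosed (compactStarSubalgebra (𝕜 := 𝕜) (H := H) : Set (H →L[𝕜] H)) :=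
  isClosed_setOfPred_isCompactOperator.inter
    (isClosed_setOfPred_isCompactOperator.preimage continuous_star)

end CompactStarSubalgebra

lemma isCompactOperator_cfc_of_isSelfAdjoint {H : Type*} [NormedAddCommGroup H]
    [InnerProductSpace ℂ H] [CompleteSpace H] {a : H →L[ℂ] H} (ha : IsSelfAdjoint a)
    (hc : IsCompactOperator a) {f : ℝ → ℝ} (hf : Continuous f) (hf0 : f 0 = 0) :
    IsCompactOperator ⇑(cfc f a) := by
  have hmem : a ∈ compactStarSubalgebra (𝕜 := ℂ) := ⟨hc, by rwa [ha.star_eq]⟩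
  have hmem_cfc := cfcₙ_mem (𝕜 := ℝ) (𝕜' := ℂ) (hs := isClosed_compactStarSubalgebra) f hmem
  rw [cfcₙ_eq_cfc hf.continuousOn hf0] at hmem_cfc
  exact hmem_cfc.1

end ContinuousLinearMap

lemma Complex.star_mul_self_exp_I_mul_sub_one (t : ℝ) :
    star (exp (I * t) - 1) * (exp (I * t) - 1) = ((2 - 2 * Real.cos t : ℝ) : ℂ) := by
  apply Complex.ext <;> simp [exp_re, exp_im, cos_ofReal_re] <;>
    nlinarith [Real.sin_sq_add_cos_sq t]

namespace IsSelfAdjoint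

variable {A : Type*} [CStarAlgebra A] {z : A}

lemma exp_I_smul_eq_cfc (hz : IsSelfAdjoint z) :
    NormedSpace.exp (I • z) = cfc (fun w : ℂ => Complex.exp (I * w)) z := by
  rw [← CFC.complex_exp_eq_normedSpace_exp (hz.isStarNormal.smul I), ← cfc_comp_smul I _ z]
  simp only [smul_eq_mul]

lemma star_mul_self_exp_I_smul_sub_one (hz : IsSelfAdjoint z) :
    star (NormedSpace.exp (I • z) - 1) * (NormedSpace.exp (I • z) - 1) =
      cfc (fun t : ℝ => 2 - 2 * Real.cos t) z := calc
  _ = cfc (fun w : ℂ => star (Complex.exp (I * w) - 1) * (Complex.exp (I * w) - 1)) z := by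
    rw [cfc_mul .., cfc_star, cfc_sub .., cfc_const_one ℂ z, hz.exp_I_smul_eq_cfc]
  _ = cfc (fun t : ℝ => 2 - 2 * Real.cos t) z := by
    rw [cfc_real_eq_complex _ hz]
    refine cfc_congr fun w hw => ?_
    rw [hz.mem_spectrum_eq_re hw]
    simpa using star_mul_self_exp_I_mul_sub_one w.re

open Real in
lemma cfc_sqrt_abs_eq_cfc_star_mul_self_exp_I_smul_sub_one (hz : IsSelfAdjoint z)
    (hnorm : ‖z‖ ≤ π) :
    cfc (fun t : ℝ => √|t|) z = cfc (fun s : ℝ => √(arccos (1 - s / 2)))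
      (star (NormedSpace.exp (I • z) - 1) * (NormedSpace.exp (I • z) - 1)) := by
  nontriviality A
  rw [hz.star_mul_self_exp_I_smul_sub_one, ← cfc_comp' ..]
  refine cfc_congr fun t ht => ?_
  rw [show 1 - (2 - 2 * Real.cos t) / 2 = Real.cos |t| by rw [cos_abs]; ring,
    arccos_cos (abs_nonneg t) ((spectrum.norm_le_norm_of_mem ht).trans hnorm)]

lemma cfc_sqrt_sub_sqrt_neg_mul_cfc_sqrt_abs (hz : IsSelfAdjoint z) :
    cfc (fun t : ℝ => √t - √(-t)) z * cfc (fun t : ℝ => √|t|) z = z := by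
  conv_rhs => rw [← cfc_id' ℝ z]
  rw [← cfc_mul ..]
  congr 1
  funext t
  rcases le_total 0 t with ht | ht
  · simp [abs_of_nonneg ht, Real.sqrt_eq_zero_of_nonpos (neg_nonpos.2 ht), Real.mul_self_sqrt ht]
  · simp [abs_of_nonpos ht, Real.sqrt_eq_zero_of_nonpos ht, Real.mul_self_sqrt (neg_nonneg.2 ht)]

end IsSelfAdjoint

theorem compact_of_exp_sub_one_compact_general
    {H : Type*} [NormedAddCommGroup H] [InnerProductSpace ℂ H]
    [CompleteSpace H]
    (z : H →L[ℂ] H) (hzsa : IsSelfAdjoint z) (hznorm : ‖z‖ ≤ Real.pi)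
    (hcomp : IsCompactOperator (⇑(NormedSpace.exp (Complex.I • z) - 1))) :
    IsCompactOperator (⇑z) := by
  set K := NormedSpace.exp (I • z) - 1
  have hsqrt : IsCompactOperator ⇑(cfc (fun t : ℝ => √|t|) z) := by
    rw [hzsa.cfc_sqrt_abs_eq_cfc_star_mul_self_exp_I_smul_sub_one hznorm]
    exact ContinuousLinearMap.isCompactOperator_cfc_of_isSelfAdjoint (.star_mul_self K)
      (hcomp.clm_comp (star K)) (by fun_prop) (by simp)
  rw [← hzsa.cfc_sqrt_sub_sqrt_neg_mul_cfc_sqrt_abs]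
  exact hsqrt.clm_comp _

/-- If `z` is a bounded self-adjoint operator on a complex separable Hilbert space
with `‖z‖ ≤ π` and `e^{iz} - 1` is compact, then `z` is compact. -/
theorem compact_of_exp_sub_one_compact
    {H : Type*} [NormedAddCommGroup H] [InnerProductSpace ℂ H]
    [CompleteSpace H] [TopologicalSpace.SeparableSpace H]
    (z : H →L[ℂ] H) (hzsa : IsSelfAdjoint z) (hznorm : ‖z‖ ≤ Real.pi)
    (hcomp : IsCompactOperator (⇑(NormedSpace.exp (Complex.I • z) - 1))) :
    IsCompactOperator (⇑z) :=
  compact_of_exp_sub_one_compact_general z hzsa hznorm hcomp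
end
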